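/- Suppose k₁ > 0 and k₂ < 0, and set q₀ = (2/π)·arctan(|b₂|/k₁). Then for every q with q₀ < q < 1 there exists an eigenvalue λ ∈ ℂ of J₀₂ with |arg λ| < qπ/2 (so the zero equilibrium state of the controlled type-2 fractional Stokes system is unstable for every order q ∈ (q₀, 1)). -/

import Mathlib

/-! The eigenvalue `k₁ + b₂ i` of the rotation block has positive real part, so its argument is
`arctan (b₂ / k₁)`, of absolute value exactly `q₀π/2`. -/

open Real

lemma Real.abs_arctan (x : ℝ) : |arctan x| = arctan |x| := by
  rcases abs_cases x with ⟨h, hx⟩ | ⟨h, hx⟩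
  · rw [h, abs_of_nonneg (arctan_nonneg.mpr hx)]
  · rw [h, arctan_neg, abs_of_nonpos (arctan_le_zero.mpr hx.le)]

lemma Complex.arg_eq_arctan_of_re_pos {z : ℂ} (hz : 0 < z.re) :
    z.arg = Real.arctan (z.im / z.re) := by
  have hlt := abs_lt.mp (abs_arg_lt_pi_div_two_iff.mpr (Or.inl hz))
  exact (arctan_eq_of_tan_eq (tan_arg z) ⟨hlt.1, hlt.2⟩).symm

lemma Matrix.det_sub_smul_one_rotationBlock {R : Type*} [CommRing R] (a b c z : R) :
    (of ![![a, 0, b], ![0, c, 0], ![-b, 0, a]] - z • (1 : Matrix (Fin 3) (Fin 3) R)).det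
      = (c - z) * ((a - z) ^ 2 + b ^ 2) := by
  simp [det_fin_three]
  ring

theorem stmt_10_general (b₂ k₁ k₂ : ℝ) (hk₁ : 0 < k₁)
    (q₀ : ℝ) (hq₀ : q₀ = 2 / Real.pi * Real.arctan (|b₂| / k₁)) :
    let J : Matrix (Fin 3) (Fin 3) ℂ :=
      Matrix.of ![![(k₁ : ℂ), 0, (b₂ : ℂ)], ![0, (k₂ : ℂ), 0], ![-(b₂ : ℂ), 0, (k₁ : ℂ)]]
    ∀ q : ℝ, q₀ < q → q < 1 → ∃ z : ℂ, (J - z • 1).det = 0 ∧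
      |z.arg| < q * Real.pi / 2 := by
  intro J q hq _
  set z : ℂ := k₁ + b₂ * Complex.I
  have hre : z.re = k₁ := by simp [z]
  have him : z.im = b₂ := by simp [z]
  refine ⟨z, ?_, ?_⟩
  · rw [Matrix.det_sub_smul_one_rotationBlock]
    exact mul_eq_zero_of_right _ (by linear_combination (b₂ : ℂ) ^ 2 * Complex.I_sq)
  · have harg : |z.arg| = q₀ * π / 2 := by
      rw [Complex.arg_eq_arctan_of_re_pos (hre ▸ hk₁), hre, him, abs_arctan, abs_div,
        abs_of_pos hk₁, hq₀]
      field_simp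
    rw [harg]
    gcongr

/-- If `k₁ > 0`, `k₂ < 0` and `q₀ = (2/π)·arctan(|b₂|/k₁)`, then for every
`q ∈ (q₀, 1)` there is an eigenvalue `λ` of `J₀₂` with `|arg λ| < qπ/2`. -/
theorem stmt_10 (b₂ k₁ k₂ : ℝ) (hb₂ : b₂ ≠ 0) (hk₁ : 0 < k₁) (hk₂ : k₂ < 0)
    (q₀ : ℝ) (hq₀ : q₀ = 2 / Real.pi * Real.arctan (|b₂| / k₁)) :
    let J : Matrix (Fin 3) (Fin 3) ℂ :=
      Matrix.of ![![(k₁ : ℂ), 0, (b₂ : ℂ)], ![0, (k₂ : ℂ), 0], ![-(b₂ : ℂ), 0, (k₁ : ℂ)]]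
    ∀ q : ℝ, q₀ < q → q < 1 → ∃ z : ℂ, (J - z • 1).det = 0 ∧
      |z.arg| < q * Real.pi / 2 :=
  stmt_10_general b₂ k₁ k₂ hk₁ q₀ hq₀
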